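/- Let G be a group with identity e and suppose there exist elements g₁, g₂, g₃ ∈ G and a subset D ⊆ G∖{e} such that D ∪ g₁Dg₁⁻¹ = G∖{e} and the three sets D, g₂Dg₂⁻¹, g₃Dg₃⁻¹ are pairwise disjoint. For g ∈ G let U_g denote the unitary operator on ℓ²(G∖{e}) induced by the bijection w ↦ g⁻¹wg of G∖{e}. Then the operator (1/4)(I + U_{g₁} + U_{g₂} + U_{g₃}) on ℓ²(G∖{e}) has operator norm strictly smaller than one. -/

import Mathlib

noncomputable section

/-- The Hilbert space `ℓ²(X)`. -/
abbrev Hecke.l2 (X : Type*) : Type _ := lp (fun _ : X => ℂ) 2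

/-- The canonical orthonormal basis vector `δ_x` of `ℓ²(X)`. -/
noncomputable def Hecke.dirac {X : Type*} (x : X) : Hecke.l2 X :=
  letI := Classical.decEq X
  lp.single 2 x 1

/-!
If each `U_{gᵢ}` moved a unit vector `f` by less than `ε`, the mass `p² = ‖1_D f‖²` of `f` on `D`
would be within `O(ε)` of its mass on each `gᵢDgᵢ⁻¹`, which is `D` transported by `U_{gᵢ}`.
The cover `D ∪ g₁Dg₁⁻¹` then forces `p² ≳ 1/2`, while the three disjoint sets force `p² ≲ 1/3`.
So some `U_{gᵢ}` moves `f` by at least `ε = 1/20`, and the parallelogram law gives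
`‖f + U_{gᵢ} f‖ ≤ 2 - ε²/4`, whence `‖I + U_{g₁} + U_{g₂} + U_{g₃}‖ ≤ 4 - ε²/4`.
-/

theorem norm_add_le_of_le_norm_sub (𝕜 : Type*) {E : Type*} [RCLike 𝕜] [NormedAddCommGroup E]
    [InnerProductSpace 𝕜 E] {x y : E} {ε : ℝ} (hε : 0 ≤ ε) (hxy : ‖x‖ = ‖y‖)
    (h : ε * ‖x‖ ≤ ‖x - y‖) : ‖x + y‖ ≤ (2 - ε ^ 2 / 4) * ‖x‖ := by
  have hpar := parallelogram_law_with_norm 𝕜 x y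
  rw [← hxy] at hpar
  have hsub : ‖x - y‖ ≤ 2 * ‖x‖ := by
    simpa [hxy, two_mul] using norm_sub_le x y
  have hbound_nonneg : 0 ≤ (2 - ε ^ 2 / 4) * ‖x‖ := by
    nlinarith [norm_nonneg x, mul_nonneg hε (norm_nonneg x)]
  have hsq : ‖x + y‖ ^ 2 ≤ ((2 - ε ^ 2 / 4) * ‖x‖) ^ 2 := by
    nlinarith [mul_nonneg hε (norm_nonneg x), sq_nonneg (ε ^ 2 * ‖x‖)]
  exact le_of_pow_le_pow_left₀ two_ne_zero hbound_nonneg hsq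

theorem norm_one_add_sum_le {𝕜 E ι : Type*} [RCLike 𝕜] [NormedAddCommGroup E]
    [InnerProductSpace 𝕜 E] [Fintype ι] (V : ι → E →L[𝕜] E)
    (hV : ∀ i x, ‖V i x‖ = ‖x‖) {ε : ℝ} (hε : 0 ≤ ε) (hε₂ : ε ≤ 2)
    (hmove : ∀ x, ∃ i, ε * ‖x‖ ≤ ‖V i x - x‖) :
    ‖1 + ∑ i, V i‖ ≤ Fintype.card ι + 1 - ε ^ 2 / 4 := by
  classical
  refine ContinuousLinearMap.opNorm_le_bound _
    (by nlinarith [(Fintype.card ι).cast_nonneg (α := ℝ)]) fun x => ?_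
  obtain ⟨i, hi⟩ := hmove x
  have hsplit : (1 + ∑ j, V j) x = (x + V i x) + ∑ j ∈ Finset.univ.erase i, V j x := by
    rw [← Finset.add_sum_erase _ _ (Finset.mem_univ i)]
    simp [add_assoc]
  have hpair : ‖x + V i x‖ ≤ (2 - ε ^ 2 / 4) * ‖x‖ :=
    norm_add_le_of_le_norm_sub 𝕜 hε (hV i x).symm (by rwa [norm_sub_rev])
  have hrest : ‖∑ j ∈ Finset.univ.erase i, V j x‖ ≤ (Fintype.card ι - 1 : ℝ) * ‖x‖ := by
    refine (norm_sum_le _ _).trans ?_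
    have hcard : 1 ≤ Fintype.card ι := Fintype.card_pos_iff.mpr ⟨i⟩
    simp [hV, Finset.card_erase_of_mem (Finset.mem_univ i), Nat.cast_sub hcard]
  calc ‖(1 + ∑ j, V j) x‖ ≤ ‖x + V i x‖ + ‖∑ j ∈ Finset.univ.erase i, V j x‖ := by
        rw [hsplit]; exact norm_add_le _ _
    _ ≤ (2 - ε ^ 2 / 4) * ‖x‖ + (Fintype.card ι - 1 : ℝ) * ‖x‖ := add_le_add hpair hrest
    _ = (Fintype.card ι + 1 - ε ^ 2 / 4) * ‖x‖ := by ring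

namespace Hecke

variable {X : Type*}

theorem norm_sq_eq_tsum (f : l2 X) : ‖f‖ ^ 2 = ∑' x, ‖f x‖ ^ 2 := by
  exact_mod_cast lp.norm_rpow_eq_tsum (p := 2) (by norm_num) f

theorem summable_norm_sq (f : l2 X) : Summable fun x => ‖f x‖ ^ 2 := by
  exact_mod_cast (lp.memℓp f).summable (p := 2) (by norm_num)

def indicatorL (S : Set X) : l2 X →L[ℂ] l2 X :=
  LinearMap.mkContinuous
    { toFun := fun f => ⟨S.indicator f, (lp.memℓp f).mono' fun _ => norm_indicator_le_norm_self _ _⟩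
      map_add' := fun f g => by ext x; exact congrFun (Set.indicator_add' S f g) x
      map_smul' := fun c f => by ext x; exact Set.indicator_const_smul_apply S c f x }
    1 fun f => by
      rw [one_mul]
      exact lp.norm_mono two_ne_zero fun _ => norm_indicator_le_norm_self _ _

@[simp]
theorem indicatorL_apply (S : Set X) (f : l2 X) (x : X) : indicatorL S f x = S.indicator f x :=
  rfl

theorem norm_indicatorL_le (S : Set X) (f : l2 X) : ‖indicatorL S f‖ ≤ ‖f‖ :=
  lp.norm_mono two_ne_zero fun _ => norm_indicator_le_norm_self _ _

theorem norm_sq_le_norm_indicatorL_sq_add {S T : Set X} (hST : S ∪ T = Set.univ) (f : l2 X) :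
    ‖f‖ ^ 2 ≤ ‖indicatorL S f‖ ^ 2 + ‖indicatorL T f‖ ^ 2 := by
  simp only [norm_sq_eq_tsum]
  rw [← (summable_norm_sq _).tsum_add (summable_norm_sq _)]
  refine (summable_norm_sq f).tsum_le_tsum (fun x => ?_)
    ((summable_norm_sq _).add (summable_norm_sq _))
  have hx : x ∈ S ∨ x ∈ T := by simp [← Set.mem_union, hST]
  by_cases hS : x ∈ S <;> by_cases hT : x ∈ T <;> simp_all

theorem norm_indicatorL_sq_add_add_le {S T R : Set X} (hST : Disjoint S T) (hSR : Disjoint S R)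
    (hTR : Disjoint T R) (f : l2 X) :
    ‖indicatorL S f‖ ^ 2 + ‖indicatorL T f‖ ^ 2 + ‖indicatorL R f‖ ^ 2 ≤ ‖f‖ ^ 2 := by
  simp only [norm_sq_eq_tsum]
  rw [← (summable_norm_sq _).tsum_add (summable_norm_sq _),
    ← ((summable_norm_sq _).add (summable_norm_sq _)).tsum_add (summable_norm_sq _)]
  refine Summable.tsum_le_tsum (fun x => ?_)
    (((summable_norm_sq _).add (summable_norm_sq _)).add (summable_norm_sq _)) (summable_norm_sq f)
  by_cases hS : x ∈ S <;> by_cases hT : x ∈ T <;> by_cases hR : x ∈ R <;>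
    simp_all [Set.disjoint_left]

section Permutation

variable {T : l2 X →L[ℂ] l2 X} {σ : X ≃ X}

theorem apply_eq_of_map_dirac (hT : ∀ w, T (dirac w) = dirac (σ w)) (f : l2 X) (y : X) :
    T f y = f (σ.symm y) := by
  let := Classical.decEq X
  have hsum : HasSum (fun w => T (lp.single 2 w (f w)) y) (T f y) :=
    ((lp.hasSum_single ENNReal.ofNat_ne_top f).mapL T).mapL (lp.evalCLM ℂ _ 2 y)
  have hterm : ∀ w, T (lp.single 2 w (f w)) y = if w = σ.symm y then f (σ.symm y) else 0 := by
    intro w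
    have hsingle : lp.single 2 w (f w) = f w • dirac w := by
      rw [dirac, ← lp.single_smul, smul_eq_mul, mul_one]
    rw [hsingle, map_smul, hT, dirac]
    by_cases hw : w = σ.symm y
    · subst hw
      simp
    · have hy : y ≠ σ w := fun hy => hw (by rw [hy, Equiv.symm_apply_apply])
      simp [hw, hy]
  simp only [hterm] at hsum
  exact hsum.unique (hasSum_ite_eq _ _)

theorem norm_map_of_map_dirac (hT : ∀ w, T (dirac w) = dirac (σ w)) (f : l2 X) :
    ‖T f‖ = ‖f‖ := by
  refine (sq_eq_sq₀ (norm_nonneg _) (norm_nonneg _)).mp ?_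
  rw [norm_sq_eq_tsum, norm_sq_eq_tsum]
  simp only [apply_eq_of_map_dirac hT]
  exact σ.symm.tsum_eq fun x => ‖f x‖ ^ 2

theorem indicatorL_map_of_map_dirac (hT : ∀ w, T (dirac w) = dirac (σ w)) (S : Set X)
    (f : l2 X) : indicatorL S (T f) = T (indicatorL (σ ⁻¹' S) f) := by
  ext y
  by_cases hy : y ∈ S <;> simp [apply_eq_of_map_dirac hT, hy]

end Permutation

theorem exists_le_norm_map_sub_self {T : Fin 3 → l2 X →L[ℂ] l2 X} {σ : Fin 3 → X ≃ X}
    (hT : ∀ i w, T i (dirac w) = dirac (σ i w)) {S : Set X} (hcover : S ∪ σ 0 ⁻¹' S = Set.univ)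
    (hdisj₁ : Disjoint S (σ 1 ⁻¹' S)) (hdisj₂ : Disjoint S (σ 2 ⁻¹' S))
    (hdisj₁₂ : Disjoint (σ 1 ⁻¹' S) (σ 2 ⁻¹' S)) (f : l2 X) :
    ∃ i, 1 / 20 * ‖f‖ ≤ ‖T i f - f‖ := by
  by_contra! hsmall
  set n := ‖f‖
  set p := ‖indicatorL S f‖
  set q := fun i => ‖indicatorL (σ i ⁻¹' S) f‖
  have hn : 0 < n := by linarith [hsmall 0, norm_nonneg (T 0 f - f)]
  -- `σ i ⁻¹' S` is `S` transported by the unitary `T i`, and `T i` barely moves `f`.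
  have hclose : ∀ i, |q i - p| < n / 20 := fun i => calc
    |q i - p| = |‖indicatorL S (T i f)‖ - ‖indicatorL S f‖| := by
        rw [indicatorL_map_of_map_dirac (hT i), norm_map_of_map_dirac (hT i)]
    _ ≤ ‖indicatorL S (T i f - f)‖ := by rw [map_sub]; exact abs_norm_sub_norm_le _ _
    _ ≤ ‖T i f - f‖ := norm_indicatorL_le _ _
    _ < n / 20 := by linarith [hsmall i]
  have hq₀ : q 0 ≤ p + n / 20 := by linarith [(abs_lt.mp (hclose 0)).2]
  have hq₁ : p - n / 20 ≤ q 1 := by linarith [(abs_lt.mp (hclose 1)).1]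
  have hq₂ : p - n / 20 ≤ q 2 := by linarith [(abs_lt.mp (hclose 2)).1]
  have hcov : n ^ 2 ≤ p ^ 2 + q 0 ^ 2 := norm_sq_le_norm_indicatorL_sq_add hcover f
  have hdisj : p ^ 2 + q 1 ^ 2 + q 2 ^ 2 ≤ n ^ 2 :=
    norm_indicatorL_sq_add_add_le hdisj₁ hdisj₂ hdisj₁₂ f
  have hp : 0 ≤ p := norm_nonneg _
  have hq : ∀ i, 0 ≤ q i := fun i => norm_nonneg _
  -- Up to `n / 20`, the cover gives `p ≥ n / √2` and the disjointness `p ≤ n / √3`.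
  have hcov' : n ^ 2 ≤ 2 * (p + n / 20) ^ 2 := by nlinarith [hq 0]
  have hp_ge : n / 20 ≤ p := by nlinarith
  have hdisj' : 3 * (p - n / 20) ^ 2 ≤ n ^ 2 := by nlinarith
  have hp_le : p ≤ 10 * (n / 20) := by nlinarith
  nlinarith

end Hecke

section Conjugation

variable {G : Type*} [Group G]

/-- `w ↦ g⁻¹ w g`, the permutation of `G ∖ {1}` underlying `U_g`. -/
def conjInvNeOne (g : G) : {w : G // w ≠ 1} ≃ {w : G // w ≠ 1} :=
  (MulAut.conj g).symm.toEquiv.subtypeEquiv fun _ => (MulEquiv.map_ne_one_iff _).symm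

theorem preimage_conjInvNeOne (g : G) (D : Set G) :
    conjInvNeOne g ⁻¹' (Subtype.val ⁻¹' D) = Subtype.val ⁻¹' ((fun d => g * d * g⁻¹) '' D) := by
  ext w
  constructor
  · intro hw
    exact ⟨_, hw, by simp [conjInvNeOne, mul_assoc]⟩
  · rintro ⟨d, hd, hdw⟩
    simpa [conjInvNeOne, ← hdw, mul_assoc] using hd

end Conjugation

open Hecke in
/-- Powers-type averaging estimate: if `D ⊆ G∖{e}` satisfies
`D ∪ g₁Dg₁⁻¹ = G∖{e}` and `D, g₂Dg₂⁻¹, g₃Dg₃⁻¹` are pairwise disjoint, then the average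
`(1/4)(I + U_{g₁} + U_{g₂} + U_{g₃})` of the conjugation unitaries on `ℓ²(G∖{e})` has norm
strictly smaller than one. -/
theorem powers_averaging_norm_lt_one {G : Type*} [Group G]
    (g : Fin 3 → G) (D : Set G)
    (hcover : D ∪ (fun d => g 0 * d * (g 0)⁻¹) '' D = {w : G | w ≠ 1})
    (hdisj₁ : Disjoint D ((fun d => g 1 * d * (g 1)⁻¹) '' D))
    (hdisj₂ : Disjoint D ((fun d => g 2 * d * (g 2)⁻¹) '' D))
    (hdisj₃ : Disjoint ((fun d => g 1 * d * (g 1)⁻¹) '' D) ((fun d => g 2 * d * (g 2)⁻¹) '' D))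
    (U : Fin 3 → (l2 {w : G // w ≠ 1} →L[ℂ] l2 {w : G // w ≠ 1}))
    (hU : ∀ (i : Fin 3) (w : {w : G // w ≠ 1}),
      U i (dirac w) = dirac (⟨(g i)⁻¹ * w.1 * g i,
        fun h => w.2 (by simpa [mul_assoc] using congrArg (fun x => g i * x * (g i)⁻¹) h)⟩ :
          {w : G // w ≠ 1})) :
    ‖(1/4 : ℂ) • ((1 : l2 {w : G // w ≠ 1} →L[ℂ] l2 {w : G // w ≠ 1}) + U 0 + U 1 + U 2)‖
      < 1 := by
  have hσ : ∀ i w, U i (dirac w) = dirac (conjInvNeOne (g i) w) := hU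
  have hmove := exists_le_norm_map_sub_self hσ (S := Subtype.val ⁻¹' D)
    (by rw [preimage_conjInvNeOne, ← Set.preimage_union, hcover]; ext w; simpa using w.2)
    (by rw [preimage_conjInvNeOne]; exact hdisj₁.preimage _)
    (by rw [preimage_conjInvNeOne]; exact hdisj₂.preimage _)
    (by rw [preimage_conjInvNeOne, preimage_conjInvNeOne]; exact hdisj₃.preimage _)
  have hsum := norm_one_add_sum_le U (fun i => norm_map_of_map_dirac (hσ i)) (by norm_num)
    (by norm_num) hmove
  rw [Fin.sum_univ_three, ← add_assoc, ← add_assoc] at hsum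
  rw [norm_smul]
  norm_num at hsum ⊢
  linarith
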